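/- arXiv:1604.08655 — 4 statements merged into one kernel-verified Lean document; each statement's English description precedes it below -/
import Mathlib

section
/- Suppose the single five-term relation T_{1,0} T_{0,1} = T_{0,1} T_{1,1} T_{1,0} holds in End_K(V)[[u,v]]. Then for every integer k ≥ 1, the commutator identity [R(k,0), R(0,1)] = R(1,1) ∘ R(k-1,0) holds in End_K(V), where [A,B] = A∘B − B∘A. -/
open Classical

/-- The generating series `T_{m,n} = Σ_{k≥0} u^{mk} v^{nk} R(mk,nk)` as a formal power
series in two commuting variables `u = X 0`, `v = X 1` with coefficients in `End_K V`:
its coefficient at the monomial `u^a v^b` is `R(a,b)` if `(a,b) = (mk,nk)` for some `k`,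
and `0` otherwise (for coprime `(m,n)` this is exactly the displayed sum). -/
noncomputable def fiveTermT {K V : Type*} [Field K] [AddCommGroup V] [Module K V]
    (R : ℕ × ℕ → Module.End K V) (m n : ℕ) :
    MvPowerSeries (Fin 2) (Module.End K V) :=
  fun d => if ∃ k : ℕ, d 0 = m * k ∧ d 1 = n * k then R (d 0, d 1) else 0

/-!
Compare the coefficients of `u^k v` in the five-term relation. On the left only
`R(k,0) R(0,1)` contributes. On the right the single power of `v` comes either from `T_{0,1}`,
giving `R(0,1) R(k,0)`, or from `T_{1,1}`, which must then contribute `u v R(1,1)`, giving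
`R(1,1) R(k-1,0)`; the factors `R(0,0) = 1` fill the remaining slots.
-/

open Finset

lemma Finset.Nat.sum_antidiagonal_ite_fst_eq_zero {M : Type*} [AddCommMonoid M] (n : ℕ)
    (f : ℕ × ℕ → M) : ∑ x ∈ antidiagonal n, (if x.1 = 0 then f x else 0) = f (0, n) := by
  cases n <;> simp [Nat.sum_antidiagonal_succ]

lemma Finset.Nat.sum_antidiagonal_ite_snd_eq_zero {M : Type*} [AddCommMonoid M] (n : ℕ)
    (f : ℕ × ℕ → M) : ∑ x ∈ antidiagonal n, (if x.2 = 0 then f x else 0) = f (n, 0) := by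
  cases n <;> simp [Nat.sum_antidiagonal_succ']

namespace MvPowerSeries

noncomputable abbrev bidegree (a b : ℕ) : Fin 2 →₀ ℕ := Finsupp.single 0 a + Finsupp.single 1 b

@[simp] lemma bidegree_apply_zero (a b : ℕ) : bidegree a b 0 = a := by simp

@[simp] lemma bidegree_apply_one (a b : ℕ) : bidegree a b 1 = b := by simp

lemma bidegree_eta (d : Fin 2 →₀ ℕ) : bidegree (d 0) (d 1) = d := by
  ext i; fin_cases i <;> simp

lemma bidegree_add_bidegree (a b a' b' : ℕ) :
    bidegree a b + bidegree a' b' = bidegree (a + a') (b + b') := by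
  ext i; fin_cases i <;> simp

lemma coeff_bidegree_mul {A : Type*} [Semiring A] (φ ψ : MvPowerSeries (Fin 2) A) (a b : ℕ) :
    coeff (bidegree a b) (φ * ψ) = ∑ x ∈ antidiagonal a, ∑ y ∈ antidiagonal b,
      coeff (bidegree x.1 y.1) φ * coeff (bidegree x.2 y.2) ψ := by
  rw [coeff_mul, ← sum_product']
  refine sum_nbij' (fun p => ((p.1 0, p.2 0), (p.1 1, p.2 1)))
    (fun q => (bidegree q.1.1 q.2.1, bidegree q.1.2 q.2.2)) ?_ ?_ ?_ ?_ ?_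
  · rintro ⟨p, q⟩ h
    simp only [HasAntidiagonal.mem_antidiagonal] at h
    simp [← Finsupp.add_apply, h]
  · rintro ⟨⟨i, i'⟩, ⟨j, j'⟩⟩ h
    simp only [mem_product, HasAntidiagonal.mem_antidiagonal] at h
    simp [bidegree_add_bidegree, h]
  · rintro ⟨p, q⟩ -
    simp [bidegree_eta]
  · rintro ⟨⟨i, i'⟩, ⟨j, j'⟩⟩ -
    simp
  · rintro ⟨p, q⟩ -
    simp [bidegree_eta]

end MvPowerSeries

open MvPowerSeries

section FiveTerm

variable {K V : Type*} [Field K] [AddCommGroup V] [Module K V] (R : ℕ × ℕ → Module.End K V)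

lemma coeff_bidegree_fiveTermT (m n a b : ℕ) : coeff (bidegree a b) (fiveTermT R m n) =
    if ∃ k, a = m * k ∧ b = n * k then R (a, b) else 0 := by
  simp [coeff_apply, fiveTermT]

@[simp] lemma coeff_bidegree_fiveTermT_one_zero (a b : ℕ) :
    coeff (bidegree a b) (fiveTermT R 1 0) = if b = 0 then R (a, 0) else 0 := by
  rw [coeff_bidegree_fiveTermT]
  by_cases hb : b = 0 <;> simp [hb]

@[simp] lemma coeff_bidegree_fiveTermT_zero_one (a b : ℕ) :
    coeff (bidegree a b) (fiveTermT R 0 1) = if a = 0 then R (0, b) else 0 := by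
  rw [coeff_bidegree_fiveTermT]
  by_cases ha : a = 0 <;> simp [ha]

@[simp] lemma coeff_bidegree_fiveTermT_one_one (a b : ℕ) :
    coeff (bidegree a b) (fiveTermT R 1 1) = if a = b then R (a, a) else 0 := by
  rw [coeff_bidegree_fiveTermT]
  by_cases h : a = b <;> simp [h, eq_comm]

lemma coeff_bidegree_fiveTermT_one_zero_mul_zero_one (a b : ℕ) :
    coeff (bidegree a b) (fiveTermT R 1 0 * fiveTermT R 0 1) = R (a, 0) * R (0, b) := by
  simp [coeff_bidegree_mul, Nat.sum_antidiagonal_ite_fst_eq_zero,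
    Nat.sum_antidiagonal_ite_snd_eq_zero]

lemma coeff_bidegree_fiveTermT_zero_one_mul (φ : MvPowerSeries (Fin 2) (Module.End K V))
    (a b : ℕ) : coeff (bidegree a b) (fiveTermT R 0 1 * φ) =
      ∑ y ∈ antidiagonal b, R (0, y.1) * coeff (bidegree a y.2) φ := by
  simp [coeff_bidegree_mul, Nat.sum_antidiagonal_ite_fst_eq_zero]

lemma coeff_bidegree_fiveTermT_one_one_mul_one_zero (a b : ℕ) :
    coeff (bidegree a b) (fiveTermT R 1 1 * fiveTermT R 1 0) =
      if b ≤ a then R (b, b) * R (a - b, 0) else 0 := by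
  simp only [coeff_bidegree_mul, coeff_bidegree_fiveTermT_one_one,
    coeff_bidegree_fiveTermT_one_zero, mul_ite, ite_mul, zero_mul, mul_zero,
    Nat.sum_antidiagonal_ite_snd_eq_zero]
  split_ifs with hba
  · rw [sum_eq_single (b, a - b)]
    · simp
    · rintro ⟨i, j⟩ hij hne
      rw [HasAntidiagonal.mem_antidiagonal] at hij
      refine if_neg fun hib => hne ?_
      simp only [Prod.mk.injEq] at hib hij ⊢
      omega
    · simp [hba]
  · refine sum_eq_zero fun x hx => if_neg fun hxb => hba ?_
    rw [HasAntidiagonal.mem_antidiagonal] at hx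
    omega

end FiveTerm

theorem stmt_0 {K V : Type*} [Field K] [AddCommGroup V] [Module K V]
    (R : ℕ × ℕ → Module.End K V) (hR : R (0, 0) = LinearMap.id)
    (h5 : fiveTermT R 1 0 * fiveTermT R 0 1
        = fiveTermT R 0 1 * fiveTermT R 1 1 * fiveTermT R 1 0) :
    ∀ k : ℕ, 1 ≤ k →
      R (k, 0) ∘ₗ R (0, 1) - R (0, 1) ∘ₗ R (k, 0)
        = R (1, 1) ∘ₗ R (k - 1, 0) := by
  intro k hk
  have hR1 : R (0, 0) = 1 := hR
  have h : R (k, 0) * R (0, 1) = R (1, 1) * R (k - 1, 0) + R (0, 1) * R (k, 0) := by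
    have h := congrArg (coeff (bidegree k 1)) h5
    rw [mul_assoc, coeff_bidegree_fiveTermT_one_zero_mul_zero_one,
      coeff_bidegree_fiveTermT_zero_one_mul] at h
    simpa only [Nat.sum_antidiagonal_succ, HasAntidiagonal.antidiagonal_zero, sum_singleton,
      coeff_bidegree_fiveTermT_one_one_mul_one_zero, hk, zero_le, ↓reduceIte, tsub_zero, hR1,
      one_mul, zero_add] using h
  rw [← Module.End.mul_eq_comp, ← Module.End.mul_eq_comp, ← Module.End.mul_eq_comp, h,
    add_sub_cancel_right]
end

section
/- Suppose the single five-term relation T_{1,0} T_{0,1} = T_{0,1} T_{1,1} T_{1,0} holds in End_K(V)[[u,v]]. Then for every integer k ≥ 1, [R(k,0), R(0,1)] = [R(1,0), R(0,1)] ∘ R(k-1,0), where [A,B] = A∘B − B∘A. -/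
open Classical

/-! Compare the coefficients of `u^k v` on both sides of the five-term relation. On the left only
`R(k,0) R(0,1)` contributes. On the right, `T_{0,1}` and `T_{1,0}` only involve `v` and `u`
respectively, so the single power of `v` comes either from `T_{0,1}` or from the term `R(1,1) u v`
of `T_{1,1}`; this gives `R(k,0) R(0,1) = R(0,1) R(k,0) + R(1,1) R(k-1,0)`, and the case `k = 1`
identifies `R(1,1)` with the commutator `[R(1,0), R(0,1)]`. -/

open MvPowerSeries Finset

section AxisSupport

variable {σ : Type*}

theorem Finsupp.sum_antidiagonal_eq_sum_range_of_snd {M : Type*} [AddCommMonoid M]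
    [DecidableEq σ] (d : σ →₀ ℕ) (i : σ) {F : (σ →₀ ℕ) × (σ →₀ ℕ) → M}
    (hF : ∀ p, Finsupp.single i (p.2 i) ≠ p.2 → F p = 0) :
    ∑ p ∈ antidiagonal d, F p
      = ∑ n ∈ range (d i + 1), F (d - Finsupp.single i n, Finsupp.single i n) := by
  symm
  rw [← sum_image (g := fun n => (d - Finsupp.single i n, Finsupp.single i n))
    (fun m _ n _ h => Finsupp.single_injective i (congrArg Prod.snd h))]
  refine sum_subset (fun p hp => ?_) (fun p hp hpi => hF p fun h => hpi ?_)
  · obtain ⟨n, hn, rfl⟩ := mem_image.1 hp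
    exact mem_antidiagonal.2 (tsub_add_cancel_of_le
      (Finsupp.single_le_iff.2 (Nat.lt_succ_iff.1 (mem_range.1 hn))))
  · have hsum := mem_antidiagonal.1 hp
    refine mem_image.2 ⟨p.2 i, mem_range.2 (Nat.lt_succ_of_le ?_), ?_⟩
    · exact hsum ▸ Finsupp.le_def.1 le_add_self i
    · rw [h, ← hsum, add_tsub_cancel_right]

variable {A : Type*} [Semiring A]

theorem MvPowerSeries.coeff_mul_eq_sum_range_of_right {f : MvPowerSeries σ A} (i : σ)
    (hf : ∀ p, Finsupp.single i (p i) ≠ p → coeff p f = 0) (h : MvPowerSeries σ A)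
    (d : σ →₀ ℕ) :
    coeff d (h * f) = ∑ n ∈ range (d i + 1),
      coeff (d - Finsupp.single i n) h * coeff (Finsupp.single i n) f := by
  classical
  rw [coeff_mul]
  exact Finsupp.sum_antidiagonal_eq_sum_range_of_snd d i fun p hp => by rw [hf _ hp, mul_zero]

theorem MvPowerSeries.coeff_mul_eq_sum_range_of_left {g : MvPowerSeries σ A} (i : σ)
    (hg : ∀ p, Finsupp.single i (p i) ≠ p → coeff p g = 0) (h : MvPowerSeries σ A)
    (d : σ →₀ ℕ) :
    coeff d (g * h) = ∑ n ∈ range (d i + 1),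
      coeff (Finsupp.single i n) g * coeff (d - Finsupp.single i n) h := by
  classical
  rw [coeff_mul, Finsupp.sum_antidiagonal_swap d fun p q => coeff p g * coeff q h]
  exact Finsupp.sum_antidiagonal_eq_sum_range_of_snd d i fun p hp => by rw [hg _ hp, zero_mul]

end AxisSupport

section FiveTerm

variable {K V : Type*} [Field K] [AddCommGroup V] [Module K V] (R : ℕ × ℕ → Module.End K V)

theorem coeff_fiveTermT_one_zero (p : Fin 2 →₀ ℕ) :
    coeff p (fiveTermT R 1 0) = if p 1 = 0 then R (p 0, 0) else 0 := by
  simp +contextual [coeff_apply, fiveTermT]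

theorem coeff_fiveTermT_zero_one (p : Fin 2 →₀ ℕ) :
    coeff p (fiveTermT R 0 1) = if p 0 = 0 then R (0, p 1) else 0 := by
  simp +contextual [coeff_apply, fiveTermT]

theorem coeff_fiveTermT_one_one (p : Fin 2 →₀ ℕ) :
    coeff p (fiveTermT R 1 1) = if p 0 = p 1 then R (p 0, p 0) else 0 := by
  simp +contextual [coeff_apply, fiveTermT, eq_comm]

theorem coeff_fiveTermT_one_zero_of_ne (p : Fin 2 →₀ ℕ) (hp : Finsupp.single 0 (p 0) ≠ p) :
    coeff p (fiveTermT R 1 0) = 0 := by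
  refine (coeff_fiveTermT_one_zero R p).trans (if_neg fun h => hp ?_)
  ext j; fin_cases j <;> simp [h]

theorem coeff_fiveTermT_zero_one_of_ne (p : Fin 2 →₀ ℕ) (hp : Finsupp.single 1 (p 1) ≠ p) :
    coeff p (fiveTermT R 0 1) = 0 := by
  refine (coeff_fiveTermT_zero_one R p).trans (if_neg fun h => hp ?_)
  ext j; fin_cases j <;> simp [h]

theorem coeff_fiveTermT_one_zero_mul_zero_one (e : Fin 2 →₀ ℕ) :
    coeff e (fiveTermT R 1 0 * fiveTermT R 0 1) = R (e 0, 0) * R (0, e 1) := by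
  rw [coeff_mul_eq_sum_range_of_right 1 (coeff_fiveTermT_zero_one_of_ne R),
    sum_eq_single_of_mem (e 1) (self_mem_range_succ _) fun n hn hne => ?_]
  · simp [coeff_fiveTermT_one_zero, coeff_fiveTermT_zero_one]
  · have : e 1 - n ≠ 0 := by have := mem_range.1 hn; omega
    simp [coeff_fiveTermT_one_zero, this]

theorem coeff_fiveTermT_one_one_mul_one_zero (e : Fin 2 →₀ ℕ) :
    coeff e (fiveTermT R 1 1 * fiveTermT R 1 0)
      = if e 1 ≤ e 0 then R (e 1, e 1) * R (e 0 - e 1, 0) else 0 := by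
  rw [coeff_mul_eq_sum_range_of_right 0 (coeff_fiveTermT_one_zero_of_ne R)]
  simp only [coeff_fiveTermT_one_zero, coeff_fiveTermT_one_one]
  split_ifs with h
  · rw [sum_eq_single_of_mem (e 0 - e 1) (mem_range.2 (by omega)) fun n hn hne => ?_]
    · simp [Nat.sub_sub_self h]
    · have : e 0 - n ≠ e 1 := by have := mem_range.1 hn; omega
      simp [this]
  · exact sum_eq_zero fun n _ => by simp [show e 0 - n ≠ e 1 by omega]

theorem fiveTerm_commutation_relation
    (h5 : fiveTermT R 1 0 * fiveTermT R 0 1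
        = fiveTermT R 0 1 * fiveTermT R 1 1 * fiveTermT R 1 0) {k : ℕ} (hk : 1 ≤ k) :
    R (k, 0) * R (0, 1)
      = R (0, 0) * R (1, 1) * R (k - 1, 0) + R (0, 1) * R (0, 0) * R (k, 0) := by
  have h := congrArg (coeff (Finsupp.single 0 k + Finsupp.single 1 1)) h5
  rw [coeff_fiveTermT_one_zero_mul_zero_one, mul_assoc,
    coeff_mul_eq_sum_range_of_left 1 (coeff_fiveTermT_zero_one_of_ne R)] at h
  simpa [sum_range_succ, coeff_fiveTermT_zero_one, coeff_fiveTermT_one_one_mul_one_zero, hk,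
    mul_assoc] using h

end FiveTerm

theorem stmt_2 {K V : Type*} [Field K] [AddCommGroup V] [Module K V]
    (R : ℕ × ℕ → Module.End K V) (hR : R (0, 0) = LinearMap.id)
    (h5 : fiveTermT R 1 0 * fiveTermT R 0 1
        = fiveTermT R 0 1 * fiveTermT R 1 1 * fiveTermT R 1 0) :
    ∀ k : ℕ, 1 ≤ k →
      R (k, 0) ∘ₗ R (0, 1) - R (0, 1) ∘ₗ R (k, 0)
        = (R (1, 0) ∘ₗ R (0, 1) - R (0, 1) ∘ₗ R (1, 0)) ∘ₗ R (k - 1, 0) := by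
  intro k hk
  have hone : R (0, 0) = 1 := hR
  have hRk := fiveTerm_commutation_relation R h5 hk
  have hR1 := fiveTerm_commutation_relation R h5 le_rfl
  simp only [hone, one_mul, mul_one, Nat.sub_self] at hRk hR1
  simp only [← Module.End.mul_eq_comp]
  rw [hRk, hR1, add_sub_cancel_right, add_sub_cancel_right]
end

section
/- Let m, n, m', n' be natural numbers with m·n' − m'·n = 1. The five-term relation T_{m,n} T_{m',n'} = T_{m',n'} T_{m+m',n+n'} T_{m,n} holds in End_K(V)[[u,v]] if and only if for all natural numbers a, b one has R(am,an) ∘ R(bm',bn') = Σ_{e=0}^{min(a,b)} R((b-e)m',(b-e)n') ∘ R(e(m+m'),e(n+n')) ∘ R((a-e)m,(a-e)n) in End_K(V). -/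
open Classical

/-!
Since `m n' - m' n ≠ 0`, the vectors `(m, n)` and `(m', n')` are linearly independent, so each
monomial `u^{am+bm'} v^{an+bn'}` arises in `T_{m,n} T_{m',n'}` from the single product of the
terms of degrees `a` and `b`, with coefficient `R(am,an) R(bm',bn')`. In the triple product it
arises exactly from the terms of degrees `b - e`, `e`, `a - e` with `e ≤ min a b`, and no other
monomial occurs on either side. Comparing coefficients gives the equivalence.
-/

open MvPowerSeries

theorem Finsupp.smul_left_injective_nat {σ : Type*} {d : σ →₀ ℕ} (hd : d ≠ 0) :
    Function.Injective fun k : ℕ => k • d := by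
  obtain ⟨i, hi⟩ := Finsupp.ne_iff.1 hd
  intro k k' h
  have hi' : k * d i = k' * d i := by
    simpa only [Finsupp.smul_apply, smul_eq_mul] using congrArg (· i) h
  exact Nat.eq_of_mul_eq_mul_right (Nat.pos_of_ne_zero hi) hi'

section Support

variable {σ A α β : Type*} [Semiring A] {f g : MvPowerSeries σ A}
  {F : α → σ →₀ ℕ} {G : β → σ →₀ ℕ}

theorem MvPowerSeries.coeff_mul_eq_sum_of_support (hF : F.Injective) (hG : G.Injective)
    (hf : ∀ d ∉ Set.range F, coeff d f = 0) (hg : ∀ d ∉ Set.range G, coeff d g = 0)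
    {d : σ →₀ ℕ} (s : Finset (α × β)) (hs : ∀ ij, ij ∈ s ↔ F ij.1 + G ij.2 = d) :
    coeff d (f * g) = ∑ ij ∈ s, coeff (F ij.1) f * coeff (G ij.2) g := by
  classical
  rw [coeff_mul]
  refine (Finset.sum_of_injOn (fun ij : α × β => (F ij.1, G ij.2)) ?_ ?_ ?_ fun _ _ => rfl).symm
  · intro ij _ ij' _ h
    simp only [Prod.mk.injEq] at h
    exact Prod.ext (hF h.1) (hG h.2)
  · intro ij hij
    simpa using (hs ij).1 hij
  · rintro ⟨p, q⟩ hpq hnot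
    by_cases hp : p ∈ Set.range F
    · by_cases hq : q ∈ Set.range G
      · obtain ⟨i, rfl⟩ := hp
        obtain ⟨j, rfl⟩ := hq
        exact absurd ⟨(i, j), (hs _).2 (Finset.HasAntidiagonal.mem_antidiagonal.1 hpq), rfl⟩ hnot
      · simp [hg q hq]
    · simp [hf p hp]

theorem MvPowerSeries.coeff_mul_add_of_support (hF : F.Injective) (hG : G.Injective)
    (hf : ∀ d ∉ Set.range F, coeff d f = 0) (hg : ∀ d ∉ Set.range G, coeff d g = 0)
    (hFG : Function.Injective fun ij : α × β => F ij.1 + G ij.2) (i : α) (j : β) :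
    coeff (F i + G j) (f * g) = coeff (F i) f * coeff (G j) g := by
  simpa using coeff_mul_eq_sum_of_support hF hG hf hg {(i, j)} fun ij : α × β =>
    (Finset.mem_singleton.trans hFG.eq_iff.symm)

theorem MvPowerSeries.coeff_mul_eq_zero_of_support (hF : F.Injective) (hG : G.Injective)
    (hf : ∀ d ∉ Set.range F, coeff d f = 0) (hg : ∀ d ∉ Set.range G, coeff d g = 0) :
    ∀ d ∉ Set.range fun ij : α × β => F ij.1 + G ij.2, coeff d (f * g) = 0 := by
  intro d hd
  simpa using coeff_mul_eq_sum_of_support hF hG hf hg ∅ fun ij =>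
    iff_of_false (Finset.notMem_empty _) fun h => hd ⟨ij, h⟩

end Support

/-- The exponent of the monomial `u^x v^y`. -/
noncomputable def uvExp (x y : ℕ) : Fin 2 →₀ ℕ :=
  Finsupp.single 0 x + Finsupp.single 1 y

@[simp] theorem uvExp_apply_zero (x y : ℕ) : uvExp x y 0 = x := by
  simp [uvExp]

@[simp] theorem uvExp_apply_one (x y : ℕ) : uvExp x y 1 = y := by
  simp [uvExp]

theorem uvExp_eq_iff {x y : ℕ} {d : Fin 2 →₀ ℕ} : uvExp x y = d ↔ x = d 0 ∧ y = d 1 := by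
  refine ⟨fun h => by simp [← h], fun ⟨hx, hy⟩ => ?_⟩
  ext i
  fin_cases i <;> simp [hx, hy]

theorem smul_uvExp (k x y : ℕ) : k • uvExp x y = uvExp (k * x) (k * y) := by
  simp [uvExp]

theorem uvExp_add (x y x' y' : ℕ) : uvExp x y + uvExp x' y' = uvExp (x + x') (y + y') :=
  (uvExp_eq_iff.2 ⟨by simp, by simp⟩).symm

theorem smul_uvExp_add_regroup (m n m' n' x y k : ℕ) :
    x • uvExp m' n' + y • uvExp (m + m') (n + n') + k • uvExp m n
      = (k + y) • uvExp m n + (x + y) • uvExp m' n' := by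
  rw [← uvExp_add]
  module

theorem uvExp_ne_zero_of_det_ne {m n m' n' : ℕ} (hdet : m * n' ≠ m' * n) : uvExp m n ≠ 0 := by
  intro h
  obtain ⟨rfl, rfl⟩ : m = 0 ∧ n = 0 := by simpa using uvExp_eq_iff.1 h
  simp at hdet

theorem uvExp_lincomb_injective {m n m' n' : ℕ} (hdet : m * n' ≠ m' * n) :
    Function.Injective fun ab : ℕ × ℕ => ab.1 • uvExp m n + ab.2 • uvExp m' n' := by
  rintro ⟨a, b⟩ ⟨a', b'⟩ h
  simp only [smul_uvExp, uvExp_add, uvExp_eq_iff, uvExp_apply_zero, uvExp_apply_one] at h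
  have hdet' : (m : ℤ) * n' - m' * n ≠ 0 := sub_ne_zero.2 (by exact_mod_cast hdet)
  have h0 : (a : ℤ) * m + b * m' = a' * m + b' * m' := by exact_mod_cast h.1
  have h1 : (a : ℤ) * n + b * n' = a' * n + b' * n' := by exact_mod_cast h.2
  have ha : ((a : ℤ) - a') * (m * n' - m' * n) = 0 := by linear_combination n' * h0 - m' * h1
  have hb : ((b : ℤ) - b') * (m * n' - m' * n) = 0 := by linear_combination m * h1 - n * h0
  simp only [mul_eq_zero, hdet', or_false, sub_eq_zero, Nat.cast_inj] at ha hb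
  exact Prod.ext ha hb

theorem mul_add_ne_add_mul {m n m' n' : ℕ} (hdet : m * n' ≠ m' * n) :
    m' * (n + n') ≠ (m + m') * n' := by
  contrapose! hdet
  linarith

section FiveTerm

variable {K V : Type*} [Field K] [AddCommGroup V] [Module K V] (R : ℕ × ℕ → Module.End K V)

theorem coeff_smul_uvExp_fiveTermT (m n k : ℕ) :
    coeff (k • uvExp m n) (fiveTermT R m n) = R (k * m, k * n) := by
  rw [smul_uvExp]
  show (if _ then _ else _) = _
  rw [if_pos ⟨k, by simp [mul_comm], by simp [mul_comm]⟩]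
  simp

theorem coeff_fiveTermT_of_notMem (m n : ℕ) :
    ∀ d ∉ Set.range fun k : ℕ => k • uvExp m n, coeff d (fiveTermT R m n) = 0 := by
  intro d hd
  refine if_neg fun ⟨k, h0, h1⟩ => hd ⟨k, show k • uvExp m n = d from ?_⟩
  rw [smul_uvExp, uvExp_eq_iff, h0, h1, mul_comm m, mul_comm n]
  exact ⟨rfl, rfl⟩

variable {m n m' n' : ℕ}

theorem coeff_fiveTermT_mul_fiveTermT (hdet : m * n' ≠ m' * n) (a b : ℕ) :
    coeff (a • uvExp m n + b • uvExp m' n') (fiveTermT R m n * fiveTermT R m' n')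
      = R (a * m, a * n) * R (b * m', b * n') := by
  rw [coeff_mul_add_of_support (F := fun k => k • uvExp m n) (G := fun k => k • uvExp m' n')
    (Finsupp.smul_left_injective_nat (uvExp_ne_zero_of_det_ne hdet))
    (Finsupp.smul_left_injective_nat (uvExp_ne_zero_of_det_ne hdet.symm))
    (coeff_fiveTermT_of_notMem R m n) (coeff_fiveTermT_of_notMem R m' n')
    (uvExp_lincomb_injective hdet), coeff_smul_uvExp_fiveTermT, coeff_smul_uvExp_fiveTermT]

theorem coeff_fiveTermT_mul_fiveTermT_of_notMem (hdet : m * n' ≠ m' * n) :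
    ∀ d ∉ Set.range fun ab : ℕ × ℕ => ab.1 • uvExp m n + ab.2 • uvExp m' n',
      coeff d (fiveTermT R m n * fiveTermT R m' n') = 0 :=
  coeff_mul_eq_zero_of_support
    (Finsupp.smul_left_injective_nat (uvExp_ne_zero_of_det_ne hdet))
    (Finsupp.smul_left_injective_nat (uvExp_ne_zero_of_det_ne hdet.symm))
    (coeff_fiveTermT_of_notMem R m n) (coeff_fiveTermT_of_notMem R m' n')

/-- Since `x • (m', n') + y • (m + m', n + n') + k • (m, n) = (k + y) • (m, n) + (x + y) • (m', n')`,
the factorizations of `a • (m, n) + b • (m', n')` are indexed by `y = e ≤ min a b`. -/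
theorem coeff_fiveTermT_mul_fiveTermT_mul_fiveTermT (hdet : m * n' ≠ m' * n) (a b : ℕ) :
    coeff (a • uvExp m n + b • uvExp m' n')
        (fiveTermT R m' n' * fiveTermT R (m + m') (n + n') * fiveTermT R m n)
      = ∑ e ∈ Finset.range (min a b + 1),
          R ((b - e) * m', (b - e) * n') * R (e * (m + m'), e * (n + n'))
            * R ((a - e) * m, (a - e) * n) := by
  have hdet' := mul_add_ne_add_mul hdet
  rw [coeff_mul_eq_sum_of_support (uvExp_lincomb_injective hdet')
    (Finsupp.smul_left_injective_nat (uvExp_ne_zero_of_det_ne hdet))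
    (coeff_fiveTermT_mul_fiveTermT_of_notMem R hdet') (coeff_fiveTermT_of_notMem R m n)
    ((Finset.range (min a b + 1)).image fun e => ((b - e, e), a - e)) ?_, Finset.sum_image]
  · refine Finset.sum_congr rfl fun e _ => ?_
    rw [coeff_fiveTermT_mul_fiveTermT R hdet', coeff_smul_uvExp_fiveTermT]
  · intro e _ e' _ h
    exact congrArg (·.1.2) h
  · rintro ⟨⟨x, y⟩, k⟩
    rw [smul_uvExp_add_regroup]
    refine Iff.trans ?_
      ((uvExp_lincomb_injective hdet).eq_iff (a := (k + y, x + y)) (b := (a, b))).symm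
    simp only [Finset.mem_image, Finset.mem_range, Prod.mk.injEq]
    constructor
    · rintro ⟨e, he, ⟨rfl, rfl⟩, rfl⟩
      omega
    · rintro ⟨rfl, rfl⟩
      exact ⟨y, by omega, ⟨by omega, rfl⟩, by omega⟩

theorem coeff_fiveTermT_mul_fiveTermT_mul_fiveTermT_of_notMem (hdet : m * n' ≠ m' * n) :
    ∀ d ∉ Set.range fun ab : ℕ × ℕ => ab.1 • uvExp m n + ab.2 • uvExp m' n',
      coeff d (fiveTermT R m' n' * fiveTermT R (m + m') (n + n') * fiveTermT R m n) = 0 := by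
  have hdet' := mul_add_ne_add_mul hdet
  intro d hd
  refine coeff_mul_eq_zero_of_support (uvExp_lincomb_injective hdet')
    (Finsupp.smul_left_injective_nat (uvExp_ne_zero_of_det_ne hdet))
    (coeff_fiveTermT_mul_fiveTermT_of_notMem R hdet') (coeff_fiveTermT_of_notMem R m n) d
    fun ⟨⟨⟨x, y⟩, k⟩, h⟩ => hd ⟨(k + y, x + y), h ▸ (smul_uvExp_add_regroup ..).symm⟩

end FiveTerm

theorem stmt_4_general {K V : Type*} [Field K] [AddCommGroup V] [Module K V]
    (R : ℕ × ℕ → Module.End K V)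
    (m n m' n' : ℕ) (hdet : m * n' - m' * n = 1) :
    (fiveTermT R m n * fiveTermT R m' n'
        = fiveTermT R m' n' * fiveTermT R (m + m') (n + n') * fiveTermT R m n)
      ↔ ∀ a b : ℕ,
          R (a * m, a * n) ∘ₗ R (b * m', b * n')
            = ∑ e ∈ Finset.range (min a b + 1),
                R ((b - e) * m', (b - e) * n')
                  ∘ₗ R (e * (m + m'), e * (n + n'))
                  ∘ₗ R ((a - e) * m, (a - e) * n) := by
  have hdet : m * n' ≠ m' * n := by omega
  simp only [← Module.End.mul_eq_comp, ← mul_assoc,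
    ← coeff_fiveTermT_mul_fiveTermT R hdet, ← coeff_fiveTermT_mul_fiveTermT_mul_fiveTermT R hdet]
  refine ⟨fun h a b => by rw [h], fun h => MvPowerSeries.ext fun d => ?_⟩
  by_cases hd : d ∈ Set.range fun ab : ℕ × ℕ => ab.1 • uvExp m n + ab.2 • uvExp m' n'
  · obtain ⟨⟨a, b⟩, rfl⟩ := hd
    exact h a b
  · rw [coeff_fiveTermT_mul_fiveTermT_of_notMem R hdet d hd,
      coeff_fiveTermT_mul_fiveTermT_mul_fiveTermT_of_notMem R hdet d hd]

theorem stmt_4 {K V : Type*} [Field K] [AddCommGroup V] [Module K V]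
    (R : ℕ × ℕ → Module.End K V) (hR : R (0, 0) = LinearMap.id)
    (m n m' n' : ℕ) (hdet : m * n' - m' * n = 1) :
    (fiveTermT R m n * fiveTermT R m' n'
        = fiveTermT R m' n' * fiveTermT R (m + m') (n + n') * fiveTermT R m n)
      ↔ ∀ a b : ℕ,
          R (a * m, a * n) ∘ₗ R (b * m', b * n')
            = ∑ e ∈ Finset.range (min a b + 1),
                R ((b - e) * m', (b - e) * n')
                  ∘ₗ R (e * (m + m'), e * (n + n'))
                  ∘ₗ R ((a - e) * m, (a - e) * n) :=
  stmt_4_general R m n m' n' hdet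
end

section
/- Suppose the family R satisfies the five-term relations: for all natural numbers m, n, m', n' with m·n' − m'·n = 1, T_{m,n} T_{m',n'} = T_{m',n'} T_{m+m',n+n'} T_{m,n} holds in End_K(V)[[u,v]]. Then for every pair of natural numbers (m,n), the operator R(m,n) belongs to the K-subalgebra of End_K(V) generated by the set {R(k,0) : k ≥ 1} ∪ {R(0,k) : k ≥ 1}. -/
open Classical

/-!
Induct on the exponent `(m, n)`. If `m, n ≥ 1`, then `(m, n)` is a multiple of the mediant
`(a + a', b + b')` of a Farey pair `a b' - a' b = 1`. Compare the coefficients of `u^m v^n` in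
`T_{a,b} T_{a',b'} = T_{a',b'} T_{a+a',b+b'} T_{a,b}`: all three series have constant term `1`,
`(m, n)` is a multiple of neither `(a, b)` nor `(a', b')`, and every other contribution is a
product of coefficients of strictly smaller exponent. Modulo the subalgebra generated by those,
the left side vanishes and the right side is `R(m, n)`.
-/

-- Stern–Brocot descent: subtract the smaller coordinate from the larger one.
theorem exists_farey_pair_mediant_dvd :
    ∀ m n : ℕ, 0 < m → 0 < n → ∃ a b a' b' t : ℕ,
      a * b' = a' * b + 1 ∧ m = t * (a + a') ∧ n = t * (b + b') := by
  intro m n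
  induction h : m + n using Nat.strong_induction_on generalizing m n with
  | _ s ih =>
    intro hm hn
    rcases lt_trichotomy m n with hlt | rfl | hgt
    · obtain ⟨a, b, a', b', t, hab, rfl, hnm⟩ := ih (m + (n - m)) (by omega) m (n - m) rfl hm
        (by omega)
      exact ⟨a, b + a, a', b' + a', t, by linarith, rfl,
        by rw [← Nat.sub_add_cancel hlt.le, hnm]; ring⟩
    · exact ⟨1, 0, 0, 1, m, rfl, by ring, by ring⟩
    · obtain ⟨a, b, a', b', t, hab, hmn, rfl⟩ := ih ((m - n) + n) (by omega) (m - n) n rfl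
        (by omega) hn
      exact ⟨a + b, b, a' + b', b', t, by linarith, by rw [← Nat.sub_add_cancel hgt.le, hmn]; ring,
        rfl⟩

theorem farey_mediant_mul_ne_left_mul {a b a' b' t k : ℕ} (hab : a * b' = a' * b + 1)
    (ht : 0 < t) : ¬(t * (a + a') = a * k ∧ t * (b + b') = b * k) := by
  rintro ⟨hm, hn⟩
  have : t * (a * b') = t * (a' * b) := by linear_combination a * hn - b * hm
  have := Nat.eq_of_mul_eq_mul_left ht this
  omega

theorem farey_mediant_mul_ne_right_mul {a b a' b' t k : ℕ} (hab : a * b' = a' * b + 1)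
    (ht : 0 < t) : ¬(t * (a + a') = a' * k ∧ t * (b + b') = b' * k) := by
  rintro ⟨hm, hn⟩
  have : t * (a * b') = t * (a' * b) := by linear_combination b' * hm - a' * hn
  have := Nat.eq_of_mul_eq_mul_left ht this
  omega

namespace MvPowerSeries

variable {σ S : Type*} [Ring S] (A : Subring S) {f g h : MvPowerSeries σ S} {D : σ →₀ ℕ}

theorem coeff_mul_mem_of_lt (hf : ∀ d < D, coeff d f ∈ A) (hg : ∀ d < D, coeff d g ∈ A) :
    ∀ d < D, coeff d (f * g) ∈ A := by
  intro d hd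
  rw [coeff_mul]
  refine A.sum_mem fun e he => A.mul_mem (hf _ ?_) (hg _ ?_)
  all_goals
    rw [Finset.HasAntidiagonal.mem_antidiagonal] at he
    rw [← he] at hd
  exacts [lt_of_le_of_lt le_self_add hd, lt_of_le_of_lt le_add_self hd]

theorem coeff_mul_sub_mem_of_constantCoeff_eq_one (hD : D ≠ 0) (hf0 : constantCoeff f = 1)
    (hg0 : constantCoeff g = 1) (hf : ∀ d < D, coeff d f ∈ A) (hg : ∀ d < D, coeff d g ∈ A) :
    coeff D (f * g) - (coeff D f + coeff D g) ∈ A := by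
  have hD0 : (D, 0) ∈ Finset.HasAntidiagonal.antidiagonal D := by simp
  have h0D : (0, D) ∈ (Finset.HasAntidiagonal.antidiagonal D).erase (D, 0) := by simp [hD]
  rw [coeff_mul, ← Finset.add_sum_erase _ _ hD0, ← Finset.add_sum_erase _ _ h0D,
    coeff_zero_eq_constantCoeff_apply, coeff_zero_eq_constantCoeff_apply, hf0, hg0, mul_one,
    one_mul, add_sub_add_left_eq_sub, add_sub_cancel_left]
  refine A.sum_mem fun e he => A.mul_mem (hf _ ?_) (hg _ ?_)
  all_goals
    simp only [Finset.mem_erase, Finset.HasAntidiagonal.mem_antidiagonal, ne_eq, Prod.ext_iff,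
      not_and] at he
    obtain ⟨he0D, heD0, rfl⟩ := he
  · exact lt_add_of_pos_right _ (pos_iff_ne_zero.2 fun h => heD0 (by simp [h]) h)
  · exact lt_add_of_pos_left _ (pos_iff_ne_zero.2 fun h => he0D h (by simp [h]))

theorem coeff_mem_of_mul_eq_mul_mul (hD : D ≠ 0) (hf0 : constantCoeff f = 1)
    (hg0 : constantCoeff g = 1) (hh0 : constantCoeff h = 1) (hf : ∀ d < D, coeff d f ∈ A)
    (hg : ∀ d < D, coeff d g ∈ A) (hh : ∀ d < D, coeff d h ∈ A) (hfD : coeff D f = 0)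
    (hgD : coeff D g = 0) (hfive : f * g = g * h * f) : coeff D h ∈ A := by
  have hfg := coeff_mul_sub_mem_of_constantCoeff_eq_one A hD hf0 hg0 hf hg
  have hghf := coeff_mul_sub_mem_of_constantCoeff_eq_one A hD (by simp [hg0, hh0]) hf0
    (coeff_mul_mem_of_lt A hg hh) hf
  have hgh := coeff_mul_sub_mem_of_constantCoeff_eq_one A hD hg0 hh0 hg hh
  rw [hfD, hgD, add_zero, sub_zero] at hfg
  rw [hfD, add_zero] at hghf
  rw [hgD, zero_add] at hgh
  convert A.sub_mem (A.sub_mem hfg hghf) hgh using 1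
  rw [hfive]
  abel

end MvPowerSeries

section fiveTermT

variable {K V : Type*} [Field K] [AddCommGroup V] [Module K V] (R : ℕ × ℕ → Module.End K V)

theorem coeff_fiveTermT_of_eq_mul {x y t : ℕ} {d : Fin 2 →₀ ℕ} (h0 : d 0 = x * t)
    (h1 : d 1 = y * t) : MvPowerSeries.coeff d (fiveTermT R x y) = R (d 0, d 1) :=
  if_pos ⟨t, h0, h1⟩

theorem coeff_fiveTermT_eq_zero {x y : ℕ} {d : Fin 2 →₀ ℕ}
    (h : ∀ k, d 0 = x * k → d 1 = y * k → False) :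
    MvPowerSeries.coeff d (fiveTermT R x y) = 0 :=
  if_neg fun ⟨k, h0, h1⟩ => h k h0 h1

theorem constantCoeff_fiveTermT (hR : R (0, 0) = LinearMap.id) (x y : ℕ) :
    MvPowerSeries.constantCoeff (fiveTermT R x y) = 1 := by
  rw [← MvPowerSeries.coeff_zero_eq_constantCoeff_apply,
    coeff_fiveTermT_of_eq_mul R (t := 0) rfl rfl]
  exact hR

theorem coeff_fiveTermT_mem {A : Subalgebra K (Module.End K V)} {d : Fin 2 →₀ ℕ}
    (h : R (d 0, d 1) ∈ A) (x y : ℕ) : MvPowerSeries.coeff d (fiveTermT R x y) ∈ A := by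
  change ite _ _ _ ∈ A
  split_ifs
  exacts [h, A.zero_mem]

end fiveTermT

theorem stmt_6 {K V : Type*} [Field K] [AddCommGroup V] [Module K V]
    (R : ℕ × ℕ → Module.End K V) (hR : R (0, 0) = LinearMap.id)
    (h5 : ∀ m n m' n' : ℕ, m * n' - m' * n = 1 →
        fiveTermT R m n * fiveTermT R m' n'
          = fiveTermT R m' n' * fiveTermT R (m + m') (n + n') * fiveTermT R m n) :
    ∀ m n : ℕ,
      R (m, n) ∈ Algebra.adjoin K
        ({x : Module.End K V | ∃ k : ℕ, 1 ≤ k ∧ x = R (k, 0)}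
          ∪ {x : Module.End K V | ∃ k : ℕ, 1 ≤ k ∧ x = R (0, k)}) := by
  set A := Algebra.adjoin K
    ({x : Module.End K V | ∃ k : ℕ, 1 ≤ k ∧ x = R (k, 0)}
      ∪ {x : Module.End K V | ∃ k : ℕ, 1 ≤ k ∧ x = R (0, k)})
  have h00 : R (0, 0) ∈ A := hR ▸ A.one_mem
  suffices key : ∀ D : Fin 2 →₀ ℕ, R (D 0, D 1) ∈ A by
    intro m n
    simpa using key (Finsupp.equivFunOnFinite.symm ![m, n])
  intro D
  induction D using WellFoundedLT.induction with
  | _ D ih =>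
    rcases Nat.eq_zero_or_pos (D 0) with hm | hm
    · rw [hm]
      rcases Nat.eq_zero_or_pos (D 1) with hn | hn
      · rwa [hn]
      · exact Algebra.subset_adjoin (Or.inr ⟨D 1, hn, rfl⟩)
    rcases Nat.eq_zero_or_pos (D 1) with hn | hn
    · rw [hn]
      exact Algebra.subset_adjoin (Or.inl ⟨D 0, hm, rfl⟩)
    obtain ⟨a, b, a', b', t, hab, hmt, hnt⟩ := exists_farey_pair_mediant_dvd _ _ hm hn
    have ht : 0 < t := Nat.pos_of_mul_pos_right (hmt ▸ hm)
    have hlow (x y : ℕ) : ∀ d < D, MvPowerSeries.coeff d (fiveTermT R x y) ∈ A.toSubring :=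
      fun d hd => coeff_fiveTermT_mem R (ih d hd) x y
    rw [← coeff_fiveTermT_of_eq_mul R (hmt.trans (mul_comm _ _)) (hnt.trans (mul_comm _ _))]
    refine MvPowerSeries.coeff_mem_of_mul_eq_mul_mul A.toSubring (fun h => hm.ne' (by simp [h]))
      (constantCoeff_fiveTermT R hR a b) (constantCoeff_fiveTermT R hR a' b')
      (constantCoeff_fiveTermT R hR _ _) (hlow _ _) (hlow _ _) (hlow _ _)
      (coeff_fiveTermT_eq_zero R fun k h0 h1 =>
        farey_mediant_mul_ne_left_mul hab ht ⟨hmt ▸ h0, hnt ▸ h1⟩)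
      (coeff_fiveTermT_eq_zero R fun k h0 h1 =>
        farey_mediant_mul_ne_right_mul hab ht ⟨hmt ▸ h0, hnt ▸ h1⟩)
      (h5 a b a' b' (by omega))
end
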